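/- arXiv:1604.08258 — 5 statements merged into one kernel-verified Lean document; each statement's English description precedes it below -/
import Mathlib

section
/- Let h₀ and h₁ satisfy conditions (i)–(iii). Then there is a constant C, depending only on C₀, α and γ, such that for every λ ∈ (1, 3/2) and ε ∈ (0,1) with λ − 1 < ε/2, and for every t ∈ (1−ε, 1+ε), one has |h₀(λt)·h₁(t/λ) − h₀(t)·h₁(t)| ≤ C·(λ−1)^α. -/
open Real Set MeasureTheory Filter Topology

/-- A function `h : [0,∞) → ℝ` (represented as a function on `ℝ`, with hypotheses only
on `[0,∞)`) satisfying conditions (i)–(iii), with derivative `h'` on `(0,1) ∪ (1,2) ∪ (2,∞)`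
and second derivative `h''` on `(2,∞)`. -/
structure PaperConds (C₀ α γ : ℝ) (h h' h'' : ℝ → ℝ) : Prop where
  /- (i) global bound and global `α`-Hölder continuity on `[0,∞)` -/
  bdd : ∀ t, 0 ≤ t → |h t| ≤ C₀
  holder : ∀ t, 0 ≤ t → ∀ s, 0 ≤ s → |h t - h s| ≤ C₀ * |t - s| ^ α
  /- (ii) differentiability on `(0,1) ∪ (1,2)` and quantitative bounds on
  `E_ρ = (0,1-ρ) ∪ (1+ρ,2)` for every `ρ ∈ (0,1)` -/
  diff_mid : ∀ t ∈ Ioo (0:ℝ) 1 ∪ Ioo (1:ℝ) 2, HasDerivAt h (h' t) t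
  bdd_E : ∀ ρ ∈ Ioo (0:ℝ) 1, ∀ t ∈ Ioo (0:ℝ) (1-ρ) ∪ Ioo (1+ρ) 2,
    |h t| ≤ C₀ * ρ ^ (-γ)
  bdd_deriv_E : ∀ ρ ∈ Ioo (0:ℝ) 1, ∀ t ∈ Ioo (0:ℝ) (1-ρ) ∪ Ioo (1+ρ) 2,
    |h' t| ≤ C₀ * ρ⁻¹
  holder_E : ∀ ρ ∈ Ioo (0:ℝ) 1, ∀ β ∈ Icc γ 1,
    (∀ t ∈ Ioo (0:ℝ) (1-ρ), ∀ s ∈ Ioo (0:ℝ) (1-ρ),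
      |h t - h s| ≤ C₀ * ρ ^ (-β) * |t - s| ^ β) ∧
    (∀ t ∈ Ioo (1+ρ) (2:ℝ), ∀ s ∈ Ioo (1+ρ) (2:ℝ),
      |h t - h s| ≤ C₀ * ρ ^ (-β) * |t - s| ^ β)
  holder_deriv_E : ∀ ρ ∈ Ioo (0:ℝ) 1, ∀ β ∈ Ioc (1:ℝ) (1+γ),
    (∀ t ∈ Ioo (0:ℝ) (1-ρ), ∀ s ∈ Ioo (0:ℝ) (1-ρ),
      |h' t - h' s| ≤ C₀ * ρ ^ (-β) * |t - s| ^ (β - 1)) ∧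
    (∀ t ∈ Ioo (1+ρ) (2:ℝ), ∀ s ∈ Ioo (1+ρ) (2:ℝ),
      |h' t - h' s| ≤ C₀ * ρ ^ (-β) * |t - s| ^ (β - 1))
  /- (iii) second-order differentiability and decay on `(2,∞)` -/
  diff_tail : ∀ t : ℝ, 2 < t → HasDerivAt h (h' t) t
  diff2_tail : ∀ t : ℝ, 2 < t → HasDerivAt h' (h'' t) t
  bdd_deriv_tail : ∀ t : ℝ, 2 < t → |h' t| ≤ C₀ * t ^ (-2 - γ)
  bdd_deriv2_tail : ∀ t : ℝ, 2 < t → |h'' t| ≤ C₀ * t ^ (-3 - γ)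

/-- Lemma 2.3, case `t ∈ (1-ε, 1+ε)`: there is a constant `C`, depending only on
`C₀, α, γ`, such that `|h₀(λt)h₁(t/λ) - h₀(t)h₁(t)| ≤ C (λ-1)^α`. -/
theorem stmt_1 (C₀ α γ : ℝ) (hC₀ : 0 < C₀) (hα : α ∈ Ioo (0:ℝ) 1) (hγ : γ ∈ Ioo (0:ℝ) 1) :
    ∃ C : ℝ, ∀ h₀ h₀' h₀'' h₁ h₁' h₁'' : ℝ → ℝ,
      PaperConds C₀ α γ h₀ h₀' h₀'' → PaperConds C₀ α γ h₁ h₁' h₁'' →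
      ∀ lam ∈ Ioo (1:ℝ) (3/2), ∀ ε ∈ Ioo (0:ℝ) 1, lam - 1 < ε / 2 →
      ∀ t ∈ Ioo (1 - ε) (1 + ε),
        |h₀ (lam * t) * h₁ (t / lam) - h₀ t * h₁ t| ≤ C * (lam - 1) ^ α := by
  obtain ⟨hα0, hα1⟩ := hα
  refine ⟨4 * C₀ ^ 2, ?_⟩
  intro h₀ h₀' h₀'' h₁ h₁' h₁'' P₀ P₁ lam hlam ε hε _ t ht
  obtain ⟨hl1, hl2⟩ := hlam
  obtain ⟨hε0, hε1⟩ := hε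
  have ht0 : 0 < t := by cases ht with | intro a b => linarith
  have ht2 : t < 2 := by cases ht with | intro a b => linarith
  have hδ : 0 < lam - 1 := by linarith
  have hlam0 : 0 < lam := by linarith
  have h1 : |lam * t - t| ≤ 2 * (lam - 1) := by
    rw [abs_of_nonneg (by nlinarith)]; nlinarith
  have hu : t / lam ≤ 2 := le_trans (div_le_self ht0.le hl1.le) ht2.le
  have hu0 : 0 ≤ t / lam := by positivity
  have key : t - t / lam = (t / lam) * (lam - 1) := by field_simp
  have h2 : |t / lam - t| ≤ 2 * (lam - 1) := by
    rw [abs_of_nonpos (by nlinarith [div_le_self ht0.le hl1.le])]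
    nlinarith
  have rpow_bound : ∀ x : ℝ, |x| ≤ 2 * (lam - 1) → |x| ^ α ≤ 2 * (lam - 1) ^ α := by
    intro x hx
    calc |x| ^ α ≤ (2 * (lam - 1)) ^ α :=
          Real.rpow_le_rpow (abs_nonneg x) hx hα0.le
      _ = 2 ^ α * (lam - 1) ^ α := Real.mul_rpow (by norm_num) hδ.le
      _ ≤ 2 * (lam - 1) ^ α := by
          have h2a : (2:ℝ) ^ α ≤ 2 ^ (1:ℝ) :=
            Real.rpow_le_rpow_of_exponent_le one_le_two hα1.le
          rw [Real.rpow_one] at h2a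
          have := Real.rpow_nonneg hδ.le α
          nlinarith
  have hA : |h₀ (lam * t) - h₀ t| ≤ C₀ * (2 * (lam - 1) ^ α) := by
    calc |h₀ (lam * t) - h₀ t| ≤ C₀ * |lam * t - t| ^ α :=
          P₀.holder (lam * t) (by positivity) t ht0.le
      _ ≤ C₀ * (2 * (lam - 1) ^ α) := by
          exact mul_le_mul_of_nonneg_left (rpow_bound _ h1) hC₀.le
  have hB : |h₁ (t / lam) - h₁ t| ≤ C₀ * (2 * (lam - 1) ^ α) := by
    calc |h₁ (t / lam) - h₁ t| ≤ C₀ * |t / lam - t| ^ α :=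
          P₁.holder (t / lam) hu0 t ht0.le
      _ ≤ C₀ * (2 * (lam - 1) ^ α) := by
          exact mul_le_mul_of_nonneg_left (rpow_bound _ h2) hC₀.le
  have hb1 : |h₁ (t / lam)| ≤ C₀ := P₁.bdd _ hu0
  have hb0 : |h₀ t| ≤ C₀ := P₀.bdd _ ht0.le
  have split : h₀ (lam * t) * h₁ (t / lam) - h₀ t * h₁ t
      = (h₀ (lam * t) - h₀ t) * h₁ (t / lam) + h₀ t * (h₁ (t / lam) - h₁ t) := by ring
  rw [split]
  have hpow : 0 ≤ (lam - 1) ^ α := Real.rpow_nonneg hδ.le α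
  calc |(h₀ (lam * t) - h₀ t) * h₁ (t / lam) + h₀ t * (h₁ (t / lam) - h₁ t)|
      ≤ |(h₀ (lam * t) - h₀ t) * h₁ (t / lam)| + |h₀ t * (h₁ (t / lam) - h₁ t)| :=
        abs_add_le _ _
    _ = |h₀ (lam * t) - h₀ t| * |h₁ (t / lam)| + |h₀ t| * |h₁ (t / lam) - h₁ t| := by
        rw [abs_mul, abs_mul]
    _ ≤ (C₀ * (2 * (lam - 1) ^ α)) * C₀ + C₀ * (C₀ * (2 * (lam - 1) ^ α)) := by
        gcongr <;> positivity
    _ = 4 * C₀ ^ 2 * (lam - 1) ^ α := by ring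
end

section
/- The map λ ↦ ∫₀^∞ [ log⁻|λt − 1| · χ_{[0,1]}(t/λ) + log⁻|t/λ − 1| · χ_{[0,1]}(λt) ] dt, defined for λ > 0, has one-sided (right) derivative at λ = 1 equal to 0. -/
open Real Set MeasureTheory Filter Topology

/-! The integrand is `k(λ, t) + k(λ⁻¹, t)` with `k(c, t) = log⁻|ct - 1| · χ_{[0,1]}(t/c)`.
For `c² ≤ 2` the truncation is inactive on the support `[0, c]`, so
`∫ k(c, ·) = ∫₀^c log(ct - 1) dt = c⁻¹((c² - 1) log|c² - 1| - c²)`. This is not differentiable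
at `c = 1`, but in the sum over `c = λ, λ⁻¹` the singular terms `x log|x|` combine into
`2(λ - λ⁻¹) log λ`: near `λ = 1` the map is `-λ - λ⁻¹ + 2(λ - λ⁻¹) log λ`, whose derivative at
`1` vanishes. -/

noncomputable def logNegKernel (c t : ℝ) : ℝ :=
  min (log |c * t - 1|) 0 * (Icc (0:ℝ) 1).indicator 1 (t / c)

noncomputable def logNegKernelIntegral (c : ℝ) : ℝ :=
  c⁻¹ * ((c ^ 2 - 1) * log (c ^ 2 - 1) - c ^ 2)

theorem intervalIntegrable_log_mul_sub_one (c a b : ℝ) :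
    IntervalIntegrable (fun t => log (c * t - 1)) volume a b := by
  have hf : AnalyticOnNhd ℝ (fun t : ℝ => c * t - 1) (uIcc a b) := fun x _ => by fun_prop
  exact hf.meromorphicOn.intervalIntegrable_log

theorem integral_log_mul_sub_one {c : ℝ} (hc : c ≠ 0) (b : ℝ) :
    ∫ t in (0:ℝ)..b, log (c * t - 1) = c⁻¹ * ((c * b - 1) * log (c * b - 1) - c * b) := by
  rw [intervalIntegral.integral_comp_mul_sub (fun x => log x) hc 1, integral_log]
  simp only [mul_zero, zero_sub, log_neg_eq_log, log_one, smul_eq_mul]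
  ring

section Kernel

variable {c : ℝ}

theorem logNegKernel_eq_indicator (hc : 0 < c) (hc2 : c ^ 2 ≤ 2) :
    logNegKernel c = (Icc 0 c).indicator fun t => log (c * t - 1) := by
  ext t
  by_cases ht : t ∈ Icc 0 c
  · have hmem : t / c ∈ Icc (0:ℝ) 1 := ⟨div_nonneg ht.1 hc.le, (div_le_one hc).2 ht.2⟩
    -- `c t - 1 ∈ [-1, c² - 1] ⊆ [-1, 1]`, so the truncation `min · 0` is inactive
    have hle : |c * t - 1| ≤ 1 := abs_le.2 ⟨by nlinarith [ht.1], by nlinarith [ht.2]⟩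
    rw [logNegKernel, indicator_of_mem hmem, indicator_of_mem ht,
      min_eq_left (log_nonpos (abs_nonneg _) hle), log_abs]
    simp
  · have hmem : t / c ∉ Icc (0:ℝ) 1 := fun h =>
      ht ⟨(div_nonneg_iff.1 h.1).elim (·.1) fun h' => absurd h'.2 hc.not_ge, (div_le_one hc).1 h.2⟩
    rw [logNegKernel, indicator_of_notMem hmem, indicator_of_notMem ht]
    simp

theorem integrable_logNegKernel (hc : 0 < c) (hc2 : c ^ 2 ≤ 2) : Integrable (logNegKernel c) := by
  rw [logNegKernel_eq_indicator hc hc2, integrable_indicator_iff measurableSet_Icc,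
    ← intervalIntegrable_iff_integrableOn_Icc_of_le hc.le]
  exact intervalIntegrable_log_mul_sub_one c 0 c

theorem setIntegral_Ioi_logNegKernel (hc : 0 < c) (hc2 : c ^ 2 ≤ 2) :
    ∫ t in Ioi 0, logNegKernel c t = logNegKernelIntegral c := by
  rw [← integral_Ici_eq_integral_Ioi, logNegKernel_eq_indicator hc hc2,
    setIntegral_indicator measurableSet_Icc, inter_eq_right.2 Icc_subset_Ici_self,
    integral_Icc_eq_integral_Ioc, ← intervalIntegral.integral_of_le hc.le,
    integral_log_mul_sub_one hc.ne', logNegKernelIntegral, sq]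

theorem logNegKernelIntegral_add_inv (hc : 0 < c) :
    logNegKernelIntegral c + logNegKernelIntegral c⁻¹ = -c - c⁻¹ + 2 * (c - c⁻¹) * log c := by
  rcases eq_or_ne c 1 with rfl | hc1
  · norm_num [logNegKernelIntegral]
  have hsq : c ^ 2 - 1 ≠ 0 := by
    rwa [sub_ne_zero, Ne, pow_eq_one_iff_of_nonneg hc.le two_ne_zero]
  have hlog : log (c⁻¹ ^ 2 - 1) = log (c ^ 2 - 1) - 2 * log c := by
    rw [show c⁻¹ ^ 2 - 1 = -((c ^ 2 - 1) / c ^ 2) by field_simp; ring, log_neg_eq_log,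
      log_div hsq (by positivity), log_pow]
    push_cast
    ring
  rw [logNegKernelIntegral, logNegKernelIntegral, hlog, inv_inv]
  field_simp
  ring

theorem logNegKernel_add_logNegKernel_inv (lam t : ℝ) :
    logNegKernel lam t + logNegKernel lam⁻¹ t =
      min (log |lam * t - 1|) 0 * (Icc (0:ℝ) 1).indicator 1 (t / lam)
        + min (log |t / lam - 1|) 0 * (Icc (0:ℝ) 1).indicator 1 (lam * t) := by
  rw [logNegKernel, logNegKernel, div_inv_eq_mul, inv_mul_eq_div, mul_comm t]

end Kernel

theorem hasDerivAt_symm_closedForm :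
    HasDerivAt (fun x : ℝ => -x - x⁻¹ + 2 * (x - x⁻¹) * log x) 0 1 := by
  refine (((hasDerivAt_id' (1:ℝ)).neg.sub (hasDerivAt_inv one_ne_zero)).add
    ((((hasDerivAt_id' (1:ℝ)).sub (hasDerivAt_inv one_ne_zero)).const_mul 2).mul
      (hasDerivAt_log one_ne_zero))).congr_deriv ?_
  norm_num

/-- First part of Lemma 2.6: the map
`λ ↦ ∫₀^∞ [log⁻|λt-1| · χ_{[0,1]}(t/λ) + log⁻|t/λ-1| · χ_{[0,1]}(λt)] dt`
(with `log⁻ t = min{log t, 0}`) has right derivative `0` at `λ = 1`. -/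
theorem stmt_6 :
    HasDerivWithinAt
      (fun lam : ℝ => ∫ t in Ioi (0:ℝ),
        (min (Real.log |lam * t - 1|) 0 * (Icc (0:ℝ) 1).indicator 1 (t / lam)
          + min (Real.log |t / lam - 1|) 0 * (Icc (0:ℝ) 1).indicator 1 (lam * t)))
      0 (Ioi (1:ℝ)) 1 := by
  refine (hasDerivAt_symm_closedForm.congr_of_eventuallyEq ?_).hasDerivWithinAt
  filter_upwards [Ioo_mem_nhds (by norm_num : (3 / 4 : ℝ) < 1) (by norm_num : (1 : ℝ) < 4 / 3)]
    with lam ⟨hlo, hhi⟩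
  have hlam : 0 < lam := by linarith
  have hsq : lam ^ 2 ≤ 2 := by nlinarith
  have hsq_inv : lam⁻¹ ^ 2 ≤ 2 := by
    rw [inv_pow]
    exact inv_le_of_inv_le₀ two_pos (by nlinarith)
  simp_rw [← logNegKernel_add_logNegKernel_inv]
  rw [integral_add (integrable_logNegKernel hlam hsq).integrableOn
      (integrable_logNegKernel (inv_pos.2 hlam) hsq_inv).integrableOn,
    setIntegral_Ioi_logNegKernel hlam hsq, setIntegral_Ioi_logNegKernel (inv_pos.2 hlam) hsq_inv,
    logNegKernelIntegral_add_inv hlam]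
end

section
/- Let n ≥ 1, s ∈ (0,1), let Ω ⊂ ℝⁿ be a bounded open set that is strictly star-shaped with respect to the origin, in the sense that (1/λ)·Ω ⊆ Ω for every λ > 1, and assume there is a constant C₁ > 0 such that the Lebesgue measure of (λ·Ω) \ Ω is at most C₁(λ−1) for every λ ∈ (1, 2). Let v : ℝⁿ → ℝ satisfy: v ≡ 0 on ℝⁿ \ Ω; v is s-Hölder continuous on ℝⁿ, i.e. |v(x) − v(y)| ≤ C₂|x−y|^s for some C₂ > 0 and all x, y ∈ ℝⁿ; v is differentiable at every point of Ω with |∇v(x)| ≤ C₃·δ(x)^{s−1} for all x ∈ Ω, where δ(x) = dist(x, ∂Ω); and ∫_Ω δ(x)^{s−1} dx < ∞. Let g : Ω → ℝ be bounded and continuous. Then the map λ ↦ ∫_Ω v(λx)·g(x) dx has one-sided (right) derivative at λ = 1 equal to ∫_Ω (x·∇v(x))·g(x) dx. -/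
open Real Set MeasureTheory Filter Topology Pointwise
open scoped RealInnerProductSpace

/-!
The difference quotients of `t ↦ v (t • x)` at `t = 1` are dominated by a multiple of
`‖x‖ δ(x)^(s-1)`, uniformly in `t`. Indeed, for `‖y - x‖ < δ(x)/2` the mean value theorem on
the ball `B(x, δ(x)/2)`, on which `δ ≥ δ(x)/2`, gives `|v y - v x| ≤ C₃ (δ(x)/2)^(s-1) ‖y - x‖`,
while for `‖y - x‖ ≥ δ(x)/2` Hölder continuity gives
`|v y - v x| ≤ C₂ ‖y - x‖^(s-1) ‖y - x‖ ≤ C₂ (δ(x)/2)^(s-1) ‖y - x‖`.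
As `δ^(s-1)` is integrable on `Ω` and `g` is bounded, differentiation under the integral sign
applies, and even yields a two-sided derivative.
-/

open Metric

theorem continuous_of_abs_sub_le_mul_norm_rpow {E : Type*} [SeminormedAddCommGroup E]
    {f : E → ℝ} {C s : ℝ} (hs : 0 < s) (hf : ∀ x y, |f x - f y| ≤ C * ‖x - y‖ ^ s) :
    Continuous f := by
  refine continuous_iff_continuousAt.2 fun x ↦ tendsto_iff_norm_sub_tendsto_zero.2 <|
    squeeze_zero (fun _ ↦ norm_nonneg _) (fun y ↦ hf y x) ?_
  have : Continuous fun y ↦ C * ‖y - x‖ ^ s :=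
    continuous_const.mul ((continuous_id.sub continuous_const).norm.rpow_const
      fun _ ↦ Or.inr hs.le)
  simpa [Real.zero_rpow hs.ne'] using this.tendsto x

theorem hasDerivAt_integral_of_dominated_loc_of_lip' {α : Type*} [MeasurableSpace α]
    {μ : Measure α} {𝕜 : Type*} [RCLike 𝕜] {E : Type*} [NormedAddCommGroup E]
    [NormedSpace ℝ E] [NormedSpace 𝕜 E] [CompleteSpace E] {F : 𝕜 → α → E} {F' : α → E}
    {x₀ : 𝕜} {bound : α → ℝ} {s : Set 𝕜} (hs : s ∈ 𝓝 x₀)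
    (hF_meas : ∀ x ∈ s, AEStronglyMeasurable (F x) μ) (hF_int : Integrable (F x₀) μ)
    (hF'_meas : AEStronglyMeasurable F' μ)
    (h_lipsch : ∀ᵐ a ∂μ, ∀ x ∈ s, ‖F x a - F x₀ a‖ ≤ bound a * ‖x - x₀‖)
    (bound_integrable : Integrable bound μ)
    (h_diff : ∀ᵐ a ∂μ, HasDerivAt (F · a) (F' a) x₀) :
    HasDerivAt (fun x ↦ ∫ a, F x a ∂μ) (∫ a, F' a ∂μ) x₀ := by
  set L : E →L[𝕜] 𝕜 →L[𝕜] E := ContinuousLinearMap.smulRightL 𝕜 𝕜 E 1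
  have hm : AEStronglyMeasurable (L ∘ F') μ := L.continuous.comp_aestronglyMeasurable hF'_meas
  obtain ⟨hLF'_int, key⟩ := hasFDerivAt_integral_of_dominated_loc_of_lip' hs hF_meas hF_int hm
    h_lipsch bound_integrable (h_diff.mono fun _ ha ↦ ha.hasFDerivAt)
  have hF'_int : Integrable F' μ := by
    rw [← integrable_norm_iff hm] at hLF'_int
    simpa [L, Function.comp_def, integrable_norm_iff hF'_meas] using hLF'_int
  rw [hasDerivAt_iff_hasFDerivAt]
  simpa only [Function.comp_def, ContinuousLinearMap.integral_comp_comm _ hF'_int] using! key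

section NormedSpace

variable {E : Type*} [NormedAddCommGroup E] [NormedSpace ℝ E]

theorem IsOpen.infDist_frontier_pos [Nontrivial E] {Ω : Set E} (hΩo : IsOpen Ω)
    (hΩb : Bornology.IsBounded Ω) {x : E} (hx : x ∈ Ω) : 0 < infDist x (frontier Ω) := by
  have hne : (frontier Ω).Nonempty :=
    nonempty_frontier_iff.2 ⟨⟨x, hx⟩, fun h ↦ NormedSpace.unbounded_univ ℝ E (h ▸ hΩb)⟩
  refine (isClosed_frontier.notMem_iff_infDist_pos hne).1 fun hxf ↦ ?_
  exact (hΩo.inter_frontier_eq.subset ⟨hx, hxf⟩ : x ∈ (∅ : Set E))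

theorem Metric.ball_infDist_frontier_subset [FiniteDimensional ℝ E] {Ω : Set E} {x : E}
    (hx : x ∈ Ω) :
    ball x (infDist x (frontier Ω)) ⊆ Ω := by
  rcases eq_or_ne Ω univ with rfl | hΩ
  · exact subset_univ _
  obtain ⟨y, hy, hxy⟩ := exists_mem_frontier_infDist_compl_eq_dist hx hΩ
  refine (ball_subset_ball ?_).trans ball_infDist_compl_subset
  rw [hxy]
  exact infDist_le_dist_of_mem hy

end NormedSpace

section InnerProductSpace

variable {E : Type*} [NormedAddCommGroup E] [InnerProductSpace ℝ E]

theorem abs_sub_le_of_norm_gradient_le_on_ball [CompleteSpace E] {v : E → ℝ} {x y : E}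
    {r C : ℝ} (hvd : ∀ z ∈ ball x r, DifferentiableAt ℝ v z)
    (hb : ∀ z ∈ ball x r, ‖gradient v z‖ ≤ C) (hy : y ∈ ball x r) : |v y - v x| ≤ C * ‖y - x‖ := by
  have hr : 0 < r := pos_of_mem_ball hy
  refine (convex_ball x r).norm_image_sub_le_of_norm_fderiv_le hvd (fun z hz ↦ ?_)
    (mem_ball_self hr) hy
  rw [← toDual_gradient, LinearIsometryEquiv.norm_map]
  exact hb z hz

theorem hasDerivAt_apply_smul_one [CompleteSpace E] {v : E → ℝ} {x : E}
    (hv : DifferentiableAt ℝ v x) :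
    HasDerivAt (fun t : ℝ ↦ v (t • x)) ⟪x, gradient v x⟫ 1 := by
  have hv' : HasFDerivAt v (fderiv ℝ v x) ((1 : ℝ) • x) := by
    rw [one_smul]; exact hv.hasFDerivAt
  have := hv'.comp_hasDerivAt (1 : ℝ) ((hasDerivAt_id 1).smul_const x)
  rwa [one_smul, ← inner_gradient_left, real_inner_comm] at this

variable [FiniteDimensional ℝ E]

theorem abs_sub_le_of_holder_of_norm_gradient_le {Ω : Set E} {v : E → ℝ} {s C₂ C₃ : ℝ}
    (hs : s ≤ 1) (hC₂ : 0 ≤ C₂) (hC₃ : 0 ≤ C₃) (hvH : ∀ x y, |v x - v y| ≤ C₂ * ‖x - y‖ ^ s)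
    (hvd : ∀ x ∈ Ω, DifferentiableAt ℝ v x)
    (hgrad : ∀ x ∈ Ω, ‖gradient v x‖ ≤ C₃ * infDist x (frontier Ω) ^ (s - 1))
    {x : E} (hx : x ∈ Ω) (hδ : 0 < infDist x (frontier Ω)) (y : E) :
    |v y - v x| ≤ (C₂ + C₃) * (infDist x (frontier Ω) / 2) ^ (s - 1) * ‖y - x‖ := by
  set δ := infDist x (frontier Ω)
  have hδ2 : 0 < δ / 2 := half_pos hδ
  have hs1 : s - 1 ≤ 0 := by linarith
  rcases lt_or_ge ‖y - x‖ (δ / 2) with hnear | hfar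
  · have hball : ball x (δ / 2) ⊆ Ω :=
      (ball_subset_ball (half_le_self hδ.le)).trans (ball_infDist_frontier_subset hx)
    have hb : ∀ z ∈ ball x (δ / 2), ‖gradient v z‖ ≤ C₃ * (δ / 2) ^ (s - 1) := fun z hz ↦ by
      have hδz : δ / 2 ≤ infDist z (frontier Ω) := by
        have := infDist_le_infDist_add_dist (x := x) (y := z) (s := frontier Ω)
        rw [mem_ball'] at hz
        linarith
      exact (hgrad z (hball hz)).trans
        (mul_le_mul_of_nonneg_left (rpow_le_rpow_of_nonpos hδ2 hδz hs1) hC₃)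
    calc |v y - v x| ≤ C₃ * (δ / 2) ^ (s - 1) * ‖y - x‖ :=
          abs_sub_le_of_norm_gradient_le_on_ball (fun z hz ↦ hvd z (hball hz)) hb
            (mem_ball_iff_norm.2 hnear)
      _ ≤ _ := by gcongr; linarith
  · have hyx : 0 < ‖y - x‖ := hδ2.trans_le hfar
    calc |v y - v x| ≤ C₂ * ‖y - x‖ ^ s := hvH y x
      _ = C₂ * ‖y - x‖ ^ (s - 1) * ‖y - x‖ := by
          rw [rpow_sub_one hyx.ne', mul_assoc, div_mul_cancel₀ _ hyx.ne']
      _ ≤ C₂ * (δ / 2) ^ (s - 1) * ‖y - x‖ := by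
          gcongr _ * ?_ * _
          exact rpow_le_rpow_of_nonpos hδ2 hfar hs1
      _ ≤ _ := by gcongr; linarith

theorem abs_apply_smul_sub_le {Ω : Set E} {v : E → ℝ} {s C₂ C₃ : ℝ} (hΩo : IsOpen Ω)
    (hΩb : Bornology.IsBounded Ω) (hs : s ≤ 1) (hC₂ : 0 ≤ C₂) (hC₃ : 0 ≤ C₃)
    (hvH : ∀ x y, |v x - v y| ≤ C₂ * ‖x - y‖ ^ s) (hvd : ∀ x ∈ Ω, DifferentiableAt ℝ v x)
    (hgrad : ∀ x ∈ Ω, ‖gradient v x‖ ≤ C₃ * infDist x (frontier Ω) ^ (s - 1))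
    {x : E} (hx : x ∈ Ω) (t : ℝ) :
    |v (t • x) - v x| ≤ (C₂ + C₃) * (infDist x (frontier Ω) / 2) ^ (s - 1) * ‖x‖ * |t - 1| := by
  rcases eq_or_ne x 0 with rfl | hx0
  · simp
  have : Nontrivial E := nontrivial_of_ne x 0 hx0
  have h := abs_sub_le_of_holder_of_norm_gradient_le hs hC₂ hC₃ hvH hvd hgrad hx
    (hΩo.infDist_frontier_pos hΩb hx) (t • x)
  have hdisp : ‖t • x - x‖ = ‖x‖ * |t - 1| := by
    rw [show t • x - x = (t - 1) • x by rw [sub_smul, one_smul], norm_smul, Real.norm_eq_abs,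
      mul_comm]
  rwa [hdisp, ← mul_assoc] at h

theorem hasDerivAt_setIntegral_apply_smul_mul [MeasurableSpace E] [BorelSpace E]
    {μ : Measure E} [IsFiniteMeasureOnCompacts μ] {Ω : Set E} {v g : E → ℝ} {s C₂ C₃ M : ℝ}
    (hs : s ∈ Ioo 0 1) (hΩo : IsOpen Ω) (hΩb : Bornology.IsBounded Ω)
    (hC₂ : 0 ≤ C₂) (hvH : ∀ x y, |v x - v y| ≤ C₂ * ‖x - y‖ ^ s)
    (hvd : ∀ x ∈ Ω, DifferentiableAt ℝ v x) (hC₃ : 0 ≤ C₃)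
    (hgrad : ∀ x ∈ Ω, ‖gradient v x‖ ≤ C₃ * infDist x (frontier Ω) ^ (s - 1))
    (hδ : IntegrableOn (fun x ↦ infDist x (frontier Ω) ^ (s - 1)) Ω μ)
    (hgc : ContinuousOn g Ω) (hgb : ∀ x ∈ Ω, |g x| ≤ M) :
    HasDerivAt (fun t : ℝ ↦ ∫ x in Ω, v (t • x) * g x ∂μ)
      (∫ x in Ω, ⟪x, gradient v x⟫ * g x ∂μ) 1 := by
  have hΩm : MeasurableSet Ω := hΩo.measurableSet
  have hvc : Continuous v := continuous_of_abs_sub_le_mul_norm_rpow hs.1 hvH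
  have hgm : AEStronglyMeasurable g (μ.restrict Ω) := hgc.aestronglyMeasurable hΩm
  obtain ⟨R, hR⟩ := hΩb.exists_norm_le
  obtain ⟨B, hB⟩ := hΩb.isCompact_closure.exists_bound_of_continuousOn hvc.continuousOn
  have hF_int : IntegrableOn (fun x ↦ v ((1 : ℝ) • x) * g x) Ω μ := by
    refine .of_bound hΩb.measure_lt_top
      ((hvc.comp (continuous_const_smul _)).aestronglyMeasurable.mul hgm) (B * M) ?_
    filter_upwards [ae_restrict_mem hΩm] with x hx
    rw [one_smul, norm_mul, Real.norm_eq_abs (g x)]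
    exact mul_le_mul (hB x (subset_closure hx)) (hgb x hx) (abs_nonneg _)
      ((norm_nonneg _).trans (hB x (subset_closure hx)))
  have hF'_meas : AEStronglyMeasurable (fun x ↦ ⟪x, gradient v x⟫ * g x) (μ.restrict Ω) := by
    have hgrad_meas : Measurable (gradient v) :=
      (InnerProductSpace.toDual ℝ E).symm.continuous.measurable.comp (measurable_fderiv ℝ v)
    exact (measurable_id.inner hgrad_meas).aestronglyMeasurable.mul hgm
  have hbound : IntegrableOn
      (fun x ↦ (C₂ + C₃) * R * M * (infDist x (frontier Ω) / 2) ^ (s - 1)) Ω μ := by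
    simp_rw [div_rpow infDist_nonneg zero_le_two, ← mul_div_assoc]
    exact (hδ.const_mul _).div_const _
  refine hasDerivAt_integral_of_dominated_loc_of_lip' univ_mem
    (fun t _ ↦ (hvc.comp (continuous_const_smul t)).aestronglyMeasurable.mul hgm) hF_int
    hF'_meas ?_ hbound ?_
  · filter_upwards [ae_restrict_mem hΩm] with x hx t _
    rw [one_smul, ← sub_mul, norm_mul, Real.norm_eq_abs, Real.norm_eq_abs, Real.norm_eq_abs]
    have hM0 : 0 ≤ M := (abs_nonneg _).trans (hgb x hx)
    have hK : 0 ≤ (C₂ + C₃) * (infDist x (frontier Ω) / 2) ^ (s - 1) :=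
      mul_nonneg (add_nonneg hC₂ hC₃) (rpow_nonneg (div_nonneg infDist_nonneg zero_le_two) _)
    calc |v (t • x) - v x| * |g x|
        ≤ (C₂ + C₃) * (infDist x (frontier Ω) / 2) ^ (s - 1) * ‖x‖ * |t - 1| * M :=
          mul_le_mul (abs_apply_smul_sub_le hΩo hΩb hs.2.le hC₂ hC₃ hvH hvd hgrad hx t)
            (hgb x hx) (abs_nonneg _) (by positivity)
      _ ≤ (C₂ + C₃) * (infDist x (frontier Ω) / 2) ^ (s - 1) * R * |t - 1| * M := by
          gcongr
          exact hR x hx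
      _ = _ := by ring
  · filter_upwards [ae_restrict_mem hΩm] with x hx
    exact (hasDerivAt_apply_smul_one (hvd x hx)).mul_const (g x)

end InnerProductSpace

theorem stmt_10_general (n : ℕ) (s : ℝ) (hs : s ∈ Ioo (0:ℝ) 1)
    (Ω : Set (EuclideanSpace ℝ (Fin n))) (hΩo : IsOpen Ω) (hΩb : Bornology.IsBounded Ω)
    (v : EuclideanSpace ℝ (Fin n) → ℝ)
    (C₂ : ℝ) (hC₂ : 0 < C₂) (hvH : ∀ x y, |v x - v y| ≤ C₂ * ‖x - y‖ ^ s)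
    (hvd : ∀ x ∈ Ω, DifferentiableAt ℝ v x)
    (C₃ : ℝ) (hC₃ : 0 < C₃)
    (hgrad : ∀ x ∈ Ω, ‖gradient v x‖ ≤ C₃ * Metric.infDist x (frontier Ω) ^ (s - 1))
    (hδ : IntegrableOn (fun x => Metric.infDist x (frontier Ω) ^ (s - 1)) Ω volume)
    (g : EuclideanSpace ℝ (Fin n) → ℝ) (hgc : ContinuousOn g Ω)
    (M : ℝ) (hgb : ∀ x ∈ Ω, |g x| ≤ M) :
    HasDerivWithinAt (fun lam : ℝ => ∫ x in Ω, v (lam • x) * g x)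
      (∫ x in Ω, ⟪x, gradient v x⟫ * g x) (Ioi (1:ℝ)) 1 :=
  (hasDerivAt_setIntegral_apply_smul_mul hs hΩo hΩb hC₂.le hvH hvd hC₃.le hgrad hδ hgc
    hgb).hasDerivWithinAt

/-- The identity `(d/dλ)|_{λ=1⁺} ∫_Ω v(λx) g(x) dx = ∫_Ω (x·∇v(x)) g(x) dx` from the
proof of Theorem 1.1, for a bounded open strictly star-shaped domain `Ω`, a function `v`
vanishing outside `Ω`, `s`-Hölder continuous on `ℝⁿ`, differentiable in `Ω` with
`|∇v| ≤ C₃ δ^{s-1}`, `δ^{s-1}` integrable on `Ω`, and `g` bounded and continuous on `Ω`. -/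
theorem stmt_10 (n : ℕ) (hn : 1 ≤ n) (s : ℝ) (hs : s ∈ Ioo (0:ℝ) 1)
    (Ω : Set (EuclideanSpace ℝ (Fin n))) (hΩo : IsOpen Ω) (hΩb : Bornology.IsBounded Ω)
    (hstar : ∀ lam : ℝ, 1 < lam → lam⁻¹ • Ω ⊆ Ω)
    (C₁ : ℝ) (hC₁ : 0 < C₁)
    (hmeas : ∀ lam ∈ Ioo (1:ℝ) 2, volume ((lam • Ω) \ Ω) ≤ ENNReal.ofReal (C₁ * (lam - 1)))
    (v : EuclideanSpace ℝ (Fin n) → ℝ) (hv0 : ∀ x, x ∉ Ω → v x = 0)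
    (C₂ : ℝ) (hC₂ : 0 < C₂) (hvH : ∀ x y, |v x - v y| ≤ C₂ * ‖x - y‖ ^ s)
    (hvd : ∀ x ∈ Ω, DifferentiableAt ℝ v x)
    (C₃ : ℝ) (hC₃ : 0 < C₃)
    (hgrad : ∀ x ∈ Ω, ‖gradient v x‖ ≤ C₃ * Metric.infDist x (frontier Ω) ^ (s - 1))
    (hδ : IntegrableOn (fun x => Metric.infDist x (frontier Ω) ^ (s - 1)) Ω volume)
    (g : EuclideanSpace ℝ (Fin n) → ℝ) (hgc : ContinuousOn g Ω)
    (M : ℝ) (hgb : ∀ x ∈ Ω, |g x| ≤ M) :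
    HasDerivWithinAt (fun lam : ℝ => ∫ x in Ω, v (lam • x) * g x)
      (∫ x in Ω, ⟪x, gradient v x⟫ * g x) (Ioi (1:ℝ)) 1 :=
  stmt_10_general n s hs Ω hΩo hΩb v C₂ hC₂ hvH hvd C₃ hC₃ hgrad hδ g hgc M hgb
end

section
/- Let n ≥ 1, let Ω ⊂ ℝⁿ be a bounded open set containing the origin with (1/λ)·Ω ⊆ Ω for every λ > 1, and assume there is a constant C₁ > 0 such that the Lebesgue measure of (λ·Ω) \ Ω is at most C₁(λ−1) for every λ ∈ (1, 2). Let s ∈ (0,1), let v : ℝⁿ → ℝ be s-Hölder continuous on ℝⁿ with v ≡ 0 on ℝⁿ \ Ω, and let g : Ω → ℝ be bounded and measurable. Then lim_{λ→1⁺} (1/(λ−1)) ∫_{(λ·Ω) \ Ω} v(y/λ)·g(y/λ) dy = 0. -/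
open Real Set MeasureTheory Filter Topology Pointwise

/-!
A point `y = λx` of the layer `(λΩ) \ Ω` lies outside `Ω`, so `v (λx) = 0` and the Hölder bound
gives `|v x| ≤ C₂ ((λ - 1) ‖x‖)^s ≤ C₂ ((λ - 1) R)^s` for `Ω ⊆ B(0, R)`. The integrand is thus
`O((λ - 1)^s)` on a set of measure `O(λ - 1)`, and the averaged integral is `O((λ - 1)^s) → 0`.
-/

section Dilation

variable {E : Type*} [NormedAddCommGroup E] [NormedSpace ℝ E] {Ω : Set E} {v : E → ℝ} {C₂ s : ℝ}

theorem abs_le_of_holder_of_smul_notMem (hvH : ∀ x y, |v x - v y| ≤ C₂ * ‖x - y‖ ^ s)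
    (hv0 : ∀ x, x ∉ Ω → v x = 0) {lam : ℝ} (hlam : 1 ≤ lam) {x : E} (hx : lam • x ∉ Ω) :
    |v x| ≤ C₂ * ((lam - 1) * ‖x‖) ^ s := by
  have hdist : ‖x - lam • x‖ = (lam - 1) * ‖x‖ := by
    rw [← one_smul ℝ x, smul_smul, mul_one, ← sub_smul, norm_smul, one_smul, Real.norm_eq_abs,
      abs_sub_comm, abs_of_nonneg (by linarith)]
  calc |v x| = |v x - v (lam • x)| := by rw [hv0 _ hx, sub_zero]
    _ ≤ C₂ * ‖x - lam • x‖ ^ s := hvH _ _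
    _ = C₂ * ((lam - 1) * ‖x‖) ^ s := by rw [hdist]

theorem norm_mul_comp_inv_smul_le_of_mem_smul_diff
    (hvH : ∀ x y, |v x - v y| ≤ C₂ * ‖x - y‖ ^ s) (hv0 : ∀ x, x ∉ Ω → v x = 0)
    (hC₂ : 0 ≤ C₂) (hs : 0 ≤ s) {R : ℝ} (hΩR : Ω ⊆ Metric.closedBall 0 R)
    {g : E → ℝ} {M : ℝ} (hgb : ∀ x ∈ Ω, |g x| ≤ M) {lam : ℝ} (hlam : 1 ≤ lam) {y : E}
    (hy : y ∈ lam • Ω \ Ω) :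
    ‖v (lam⁻¹ • y) * g (lam⁻¹ • y)‖ ≤ C₂ * ((lam - 1) * R) ^ s * M := by
  obtain ⟨⟨x, hxΩ, rfl⟩, hxout⟩ := hy
  have hxR : ‖x‖ ≤ R := mem_closedBall_zero_iff.mp (hΩR hxΩ)
  have hlam1 : 0 ≤ lam - 1 := by linarith
  have hv : |v x| ≤ C₂ * ((lam - 1) * R) ^ s :=
    (abs_le_of_holder_of_smul_notMem hvH hv0 hlam hxout).trans (by gcongr)
  rw [inv_smul_smul₀ (by positivity), Real.norm_eq_abs, abs_mul]
  exact mul_le_mul hv (hgb x hxΩ) (abs_nonneg _)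
    (mul_nonneg hC₂ (rpow_nonneg (mul_nonneg hlam1 ((norm_nonneg x).trans hxR)) s))

theorem norm_one_div_mul_setIntegral_smul_diff_le [MeasurableSpace E] {μ : Measure E}
    (hvH : ∀ x y, |v x - v y| ≤ C₂ * ‖x - y‖ ^ s) (hv0 : ∀ x, x ∉ Ω → v x = 0)
    (hC₂ : 0 ≤ C₂) (hs : 0 ≤ s) {R : ℝ} (hR : 0 ≤ R) (hΩR : Ω ⊆ Metric.closedBall 0 R)
    {g : E → ℝ} {M : ℝ} (hM : 0 ≤ M) (hgb : ∀ x ∈ Ω, |g x| ≤ M) {C₁ : ℝ} (hC₁ : 0 ≤ C₁)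
    {lam : ℝ} (hlam : 1 < lam) (hvol : μ (lam • Ω \ Ω) ≤ ENNReal.ofReal (C₁ * (lam - 1))) :
    ‖(1 / (lam - 1)) * ∫ y in lam • Ω \ Ω, v (lam⁻¹ • y) * g (lam⁻¹ • y) ∂μ‖
      ≤ C₂ * R ^ s * M * C₁ * (lam - 1) ^ s := by
  have hlam1 : 0 < lam - 1 := by linarith
  have hA : μ.real (lam • Ω \ Ω) ≤ C₁ * (lam - 1) :=
    ENNReal.toReal_le_of_le_ofReal (by positivity) hvol
  have hI := norm_setIntegral_le_of_norm_le_const (hvol.trans_lt ENNReal.ofReal_lt_top)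
    fun y hy ↦ norm_mul_comp_inv_smul_le_of_mem_smul_diff hvH hv0 hC₂ hs hΩR hgb hlam.le hy
  calc ‖(1 / (lam - 1)) * ∫ y in lam • Ω \ Ω, v (lam⁻¹ • y) * g (lam⁻¹ • y) ∂μ‖
      = (lam - 1)⁻¹ * ‖∫ y in lam • Ω \ Ω, v (lam⁻¹ • y) * g (lam⁻¹ • y) ∂μ‖ := by
        rw [norm_mul, one_div, norm_inv, Real.norm_of_nonneg hlam1.le]
    _ ≤ (lam - 1)⁻¹ * (C₂ * ((lam - 1) * R) ^ s * M * (C₁ * (lam - 1))) := by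
        gcongr
        exact hI.trans (by gcongr)
    _ = C₂ * R ^ s * M * C₁ * (lam - 1) ^ s := by
        rw [mul_rpow hlam1.le hR]
        field_simp

end Dilation

theorem tendsto_const_mul_sub_one_rpow_nhdsGT {s : ℝ} (hs : 0 < s) (K : ℝ) :
    Tendsto (fun lam : ℝ ↦ K * (lam - 1) ^ s) (𝓝[>] 1) (𝓝 0) := by
  have hcont : Continuous (fun lam : ℝ ↦ K * (lam - 1) ^ s) :=
    continuous_const.mul ((continuous_sub_right 1).rpow_const fun _ ↦ Or.inr hs.le)
  simpa [zero_rpow hs.ne'] using (hcont.tendsto 1).mono_left nhdsWithin_le_nhds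

theorem stmt_11_general (n : ℕ)
    (Ω : Set (EuclideanSpace ℝ (Fin n))) (hΩb : Bornology.IsBounded Ω)
    (C₁ : ℝ) (hC₁ : 0 < C₁)
    (hmeas : ∀ lam ∈ Ioo (1:ℝ) 2, volume ((lam • Ω) \ Ω) ≤ ENNReal.ofReal (C₁ * (lam - 1)))
    (s : ℝ) (hs : s ∈ Ioo (0:ℝ) 1)
    (v : EuclideanSpace ℝ (Fin n) → ℝ)
    (C₂ : ℝ) (hC₂ : 0 < C₂) (hvH : ∀ x y, |v x - v y| ≤ C₂ * ‖x - y‖ ^ s)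
    (hv0 : ∀ x, x ∉ Ω → v x = 0)
    (g : EuclideanSpace ℝ (Fin n) → ℝ)
    (M : ℝ) (hgb : ∀ x ∈ Ω, |g x| ≤ M) :
    Tendsto
      (fun lam : ℝ => (1 / (lam - 1)) *
        ∫ y in (lam • Ω) \ Ω, v (lam⁻¹ • y) * g (lam⁻¹ • y))
      (𝓝[>] 1) (𝓝 0) := by
  obtain ⟨R, hR⟩ := hΩb.subset_closedBall 0
  have hΩR : Ω ⊆ Metric.closedBall 0 (max R 0) :=
    hR.trans (Metric.closedBall_subset_closedBall (le_max_left _ _))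
  have hgb' : ∀ x ∈ Ω, |g x| ≤ max M 0 := fun x hx ↦ (hgb x hx).trans (le_max_left _ _)
  refine squeeze_zero_norm' ?_ (tendsto_const_mul_sub_one_rpow_nhdsGT hs.1
    (C₂ * max R 0 ^ s * max M 0 * C₁))
  filter_upwards [Ioo_mem_nhdsGT one_lt_two] with lam hlam
  exact norm_one_div_mul_setIntegral_smul_diff_le hvH hv0 hC₂.le hs.1.le (le_max_right _ _) hΩR
    (le_max_right _ _) hgb' hC₁.le hlam.1 (hmeas lam hlam)

/-- The boundary-layer estimate in the proof of Theorem 1.1: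
`lim_{λ→1⁺} (1/(λ-1)) ∫_{(λΩ)\Ω} v(y/λ) g(y/λ) dy = 0` for a bounded open set `Ω`
containing the origin with `(1/λ)Ω ⊆ Ω` for `λ > 1` and `|(λΩ)\Ω| ≤ C₁(λ-1)`,
`v` being `s`-Hölder on `ℝⁿ` and vanishing outside `Ω`, and `g` bounded measurable. -/
theorem stmt_11 (n : ℕ) (hn : 1 ≤ n)
    (Ω : Set (EuclideanSpace ℝ (Fin n))) (hΩo : IsOpen Ω) (hΩb : Bornology.IsBounded Ω)
    (h0 : (0 : EuclideanSpace ℝ (Fin n)) ∈ Ω)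
    (hstar : ∀ lam : ℝ, 1 < lam → lam⁻¹ • Ω ⊆ Ω)
    (C₁ : ℝ) (hC₁ : 0 < C₁)
    (hmeas : ∀ lam ∈ Ioo (1:ℝ) 2, volume ((lam • Ω) \ Ω) ≤ ENNReal.ofReal (C₁ * (lam - 1)))
    (s : ℝ) (hs : s ∈ Ioo (0:ℝ) 1)
    (v : EuclideanSpace ℝ (Fin n) → ℝ)
    (C₂ : ℝ) (hC₂ : 0 < C₂) (hvH : ∀ x y, |v x - v y| ≤ C₂ * ‖x - y‖ ^ s)
    (hv0 : ∀ x, x ∉ Ω → v x = 0)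
    (g : EuclideanSpace ℝ (Fin n) → ℝ) (hgm : Measurable g)
    (M : ℝ) (hgb : ∀ x ∈ Ω, |g x| ≤ M) :
    Tendsto
      (fun lam : ℝ => (1 / (lam - 1)) *
        ∫ y in (lam • Ω) \ Ω, v (lam⁻¹ • y) * g (lam⁻¹ • y))
      (𝓝[>] 1) (𝓝 0) :=
  stmt_11_general n Ω hΩb C₁ hC₁ hmeas s hs v C₂ hC₂ hvH hv0 g M hgb
end

section
/- Let n ≥ 1, a ≥ 0, p > 0, let Ω ⊂ ℝⁿ be a bounded open set, and let v : ℝⁿ → [0,∞) be a Lipschitz function with v ≡ 0 on ℝⁿ \ Ω. Then ∫_Ω |x|^a·v(x)^p·(x·∇v(x)) dx = −((n+a)/(p+1))·∫_Ω |x|^a·v(x)^{p+1} dx, where ∇v denotes the (almost everywhere defined) gradient of v and x·∇v(x) is the Euclidean inner product. -/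
/-!
Scaling argument. For `u` Lipschitz with compact support, the change of variables `x ↦ t • x`
gives `∫ ‖x‖ ^ a * u (t • x) dx = t ^ (-(d + a)) * ∫ ‖x‖ ^ a * u x dx` for `t > 0`.
Differentiating both sides at `t = 1`, under the integral sign on the left (dominated by the
Lipschitz bound, with Rademacher's theorem supplying `Du` a.e.), yields the Euler-type identity
`∫ ‖x‖ ^ a * Du(x) x dx = -(d + a) * ∫ ‖x‖ ^ a * u x dx`. Applied to `u = v ^ (p + 1)`, which is
Lipschitz since `v` is bounded and `p + 1 ≥ 1`, the chain rule `Du = (p + 1) v ^ p Dv` gives the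
theorem.
-/

open Real Set MeasureTheory Filter Topology Module Metric
open scoped RealInnerProductSpace NNReal

theorem LipschitzWith.rpow_const_of_nonneg {α : Type*} [PseudoMetricSpace α] {v : α → ℝ}
    {K : ℝ≥0} {M q : ℝ} (hv : LipschitzWith K v) (hv0 : ∀ x, 0 ≤ v x) (hvM : ∀ x, v x ≤ M)
    (hq : 1 ≤ q) : LipschitzWith ((q * M ^ (q - 1)).toNNReal * K) fun x => v x ^ q := by
  have hpow : LipschitzOnWith (q * M ^ (q - 1)).toNNReal (fun y : ℝ => y ^ q) (Icc 0 M) := by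
    refine (convex_Icc 0 M).lipschitzOnWith_of_nnnorm_hasDerivWithin_le
      (fun y _ => (hasDerivAt_rpow_const (Or.inr hq)).hasDerivWithinAt) fun y hy => ?_
    rw [← NNReal.coe_le_coe, coe_nnnorm, Real.norm_of_nonneg (by have := hy.1; positivity),
      Real.coe_toNNReal _ (by have := hy.1.trans hy.2; positivity)]
    gcongr
    exacts [hy.1, hy.2]
  rw [← lipschitzOnWith_univ] at hv ⊢
  exact hpow.comp hv fun x _ => ⟨hv0 x, hvM x⟩

section Scaling

variable {E : Type*} [NormedAddCommGroup E] [NormedSpace ℝ E] [FiniteDimensional ℝ E]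
  [MeasurableSpace E] [BorelSpace E] (μ : Measure E) [μ.IsAddHaarMeasure]

theorem integral_norm_rpow_mul_comp_smul (a : ℝ) (u : E → ℝ) {t : ℝ} (ht : 0 < t) :
    ∫ x, ‖x‖ ^ a * u (t • x) ∂μ = t ^ (-(finrank ℝ E + a)) * ∫ x, ‖x‖ ^ a * u x ∂μ := by
  have hscale := μ.integral_comp_smul (fun x => ‖x‖ ^ a * u x) t
  simp_rw [norm_smul, Real.norm_of_nonneg ht.le, Real.mul_rpow ht.le (norm_nonneg _), mul_assoc,
    integral_const_mul, abs_of_pos (by positivity : 0 < (t ^ finrank ℝ E)⁻¹), smul_eq_mul]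
    at hscale
  rw [Real.rpow_neg ht.le, Real.rpow_add ht, Real.rpow_natCast, mul_inv, mul_assoc,
    mul_left_comm, ← hscale, inv_mul_cancel_left₀ (by positivity)]

theorem hasDerivAt_integral_mul_comp_smul {w u : E → ℝ} {K : ℝ≥0} (hw : Continuous w)
    (hu : LipschitzWith K u) (hus : HasCompactSupport u) :
    HasDerivAt (fun t : ℝ => ∫ x, w x * u (t • x) ∂μ) (∫ x, w x * fderiv ℝ u x x ∂μ) 1 := by
  obtain ⟨R, hR⟩ := hus.isCompact.isBounded.subset_closedBall 0
  have hvanish : ∀ t ∈ ball (1 : ℝ) (1 / 2), ∀ x ∉ closedBall (0 : E) (2 * R), u (t • x) = 0 := by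
    intro t ht x hx
    refine image_eq_zero_of_notMem_tsupport fun hmem => hx ?_
    have ht' : 1 / 2 ≤ |t| := by
      rw [mem_ball, Real.dist_eq, abs_lt] at ht
      rw [abs_of_pos (by linarith)]
      linarith
    have := mem_closedBall_zero_iff.1 (hR hmem)
    rw [norm_smul, Real.norm_eq_abs] at this
    rw [mem_closedBall_zero_iff]
    nlinarith [norm_nonneg x]
  set bound : E → ℝ := (closedBall (0 : E) (2 * R)).indicator fun x => |w x| * K * ‖x‖
  have hlip : ∀ x, LipschitzOnWith (Real.nnabs (bound x)) (fun t : ℝ => w x * u (t • x))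
      (ball 1 (1 / 2)) := by
    intro x
    refine LipschitzOnWith.of_dist_le_mul fun s hs t ht => ?_
    by_cases hx : x ∈ closedBall (0 : E) (2 * R)
    · have hux := hu.dist_le_mul (s • x) (t • x)
      rw [dist_eq_norm (s • x), ← sub_smul, norm_smul, ← dist_eq_norm] at hux
      rw [Real.dist_eq, ← mul_sub, abs_mul, ← Real.dist_eq, Real.coe_nnabs,
        show bound x = |w x| * K * ‖x‖ from indicator_of_mem hx _,
        abs_of_nonneg (a := |w x| * K * ‖x‖) (by positivity)]
      calc |w x| * dist (u (s • x)) (u (t • x)) ≤ |w x| * (K * (dist s t * ‖x‖)) := by gcongr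
        _ = |w x| * K * ‖x‖ * dist s t := by ring
    · rw [hvanish s hs x hx, hvanish t ht x hx, dist_self]
      positivity
  have hbound : Integrable bound μ := by
    refine (integrable_indicator_iff measurableSet_closedBall).2 ?_
    exact ((hw.abs.mul continuous_const).mul continuous_norm).continuousOn.integrableOn_compact
      (isCompact_closedBall 0 _)
  have hderiv : ∀ᵐ x ∂μ, HasDerivAt (fun t : ℝ => w x * u (t • x)) (w x * fderiv ℝ u x x) 1 := by
    filter_upwards [hu.ae_differentiableAt (μ := μ)] with x hx
    have hline : HasDerivAt (fun t : ℝ => t • x) x 1 := by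
      simpa using (hasDerivAt_id (1 : ℝ)).smul_const x
    rw [← one_smul ℝ x] at hx
    simpa using (hx.hasFDerivAt.comp_hasDerivAt 1 hline).const_mul (w x)
  have hmeas : Measurable fun x => fderiv ℝ u x x :=
    isBoundedBilinearMap_apply.continuous.measurable.comp
      ((measurable_fderiv ℝ u).prodMk measurable_id)
  refine (hasDerivAt_integral_of_dominated_loc_of_lip (ball_mem_nhds 1 (by norm_num))
    (Eventually.of_forall fun t => ?_) ?_ (hw.measurable.mul hmeas).aestronglyMeasurable
    (Eventually.of_forall hlip) hbound hderiv).2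
  · exact (hw.mul (hu.continuous.comp (continuous_const_smul t))).aestronglyMeasurable
  · simp only [one_smul]
    exact (hw.mul hu.continuous).integrable_of_hasCompactSupport hus.mul_left

theorem integral_norm_rpow_mul_fderiv_apply_self {a : ℝ} (ha : 0 ≤ a) {u : E → ℝ} {K : ℝ≥0}
    (hu : LipschitzWith K u) (hus : HasCompactSupport u) :
    ∫ x, ‖x‖ ^ a * fderiv ℝ u x x ∂μ = -(finrank ℝ E + a) * ∫ x, ‖x‖ ^ a * u x ∂μ := by
  have hpow : HasDerivAt (fun t : ℝ => t ^ (-(finrank ℝ E + a)) * ∫ x, ‖x‖ ^ a * u x ∂μ)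
      (-(finrank ℝ E + a) * ∫ x, ‖x‖ ^ a * u x ∂μ) 1 := by
    simpa using (hasDerivAt_rpow_const (x := 1) (Or.inl one_ne_zero)).mul_const
      (∫ x, ‖x‖ ^ a * u x ∂μ)
  refine (hasDerivAt_integral_mul_comp_smul μ (continuous_norm.rpow_const fun _ => Or.inr ha) hu
    hus).unique (hpow.congr_of_eventuallyEq ?_)
  filter_upwards [eventually_gt_nhds one_pos] with t ht
  exact integral_norm_rpow_mul_comp_smul μ a u ht

theorem integral_norm_rpow_mul_rpow_mul_fderiv_apply_self {a p : ℝ} (ha : 0 ≤ a) (hp : 0 ≤ p)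
    {v : E → ℝ} {K : ℝ≥0} (hv : LipschitzWith K v) (hv0 : ∀ x, 0 ≤ v x)
    (hvs : HasCompactSupport v) :
    ∫ x, ‖x‖ ^ a * v x ^ p * fderiv ℝ v x x ∂μ =
      -((finrank ℝ E + a) / (p + 1)) * ∫ x, ‖x‖ ^ a * v x ^ (p + 1) ∂μ := by
  have hq : 1 ≤ p + 1 := by linarith
  obtain ⟨M, hM⟩ := hv.continuous.bounded_above_of_compact_support hvs
  have hu := hv.rpow_const_of_nonneg hv0 (fun x => (le_abs_self _).trans (hM x)) hq
  have hus : HasCompactSupport fun x => v x ^ (p + 1) :=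
    hvs.comp_left (g := fun y : ℝ => y ^ (p + 1)) (zero_rpow (by linarith))
  have hchain : ∀ᵐ x ∂μ, ‖x‖ ^ a * fderiv ℝ (fun y => v y ^ (p + 1)) x x =
      (p + 1) * (‖x‖ ^ a * v x ^ p * fderiv ℝ v x x) := by
    filter_upwards [hv.ae_differentiableAt (μ := μ)] with x hx
    rw [(hx.hasFDerivAt.rpow_const (Or.inr hq)).fderiv, add_sub_cancel_right,
      FunLike.coe_smul, Pi.smul_apply, smul_eq_mul]
    ring
  have key := integral_norm_rpow_mul_fderiv_apply_self μ ha hu hus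
  rw [integral_congr_ae hchain, integral_const_mul] at key
  field_simp
  linear_combination key

end Scaling

theorem stmt_14_general (n : ℕ) (a p : ℝ) (ha : 0 ≤ a) (hp : 0 < p)
    (Ω : Set (EuclideanSpace ℝ (Fin n))) (hΩb : Bornology.IsBounded Ω)
    (v : EuclideanSpace ℝ (Fin n) → ℝ) (K : NNReal) (hvLip : LipschitzWith K v)
    (hvnn : ∀ x, 0 ≤ v x) (hv0 : ∀ x, x ∉ Ω → v x = 0) :
    ∫ x in Ω, ‖x‖ ^ a * v x ^ p * ⟪x, gradient v x⟫ =
      -((n + a) / (p + 1)) * ∫ x in Ω, ‖x‖ ^ a * v x ^ (p + 1) := by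
  have hvs : HasCompactSupport v :=
    .intro hΩb.isCompact_closure fun x hx => hv0 x fun h => hx (subset_closure h)
  have hgrad : ∀ x, ⟪x, gradient v x⟫ = fderiv ℝ v x x := fun x => by
    rw [real_inner_comm, inner_gradient_left]
  rw [setIntegral_eq_integral_of_forall_compl_eq_zero fun x hx => by
      rw [hv0 x hx, zero_rpow hp.ne', mul_zero, zero_mul],
    setIntegral_eq_integral_of_forall_compl_eq_zero fun x hx => by
      rw [hv0 x hx, zero_rpow (by linarith), mul_zero]]
  simp_rw [hgrad]
  simpa using integral_norm_rpow_mul_rpow_mul_fderiv_apply_self volume ha hp.le hvLip hvnn hvs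

/-- The integration-by-parts identity
`∫_Ω |x|^a v^p (x·∇v) dx = -((n+a)/(p+1)) ∫_Ω |x|^a v^{p+1} dx`
for a nonnegative Lipschitz function `v` vanishing outside the bounded open set `Ω`. -/
theorem stmt_14 (n : ℕ) (hn : 1 ≤ n) (a p : ℝ) (ha : 0 ≤ a) (hp : 0 < p)
    (Ω : Set (EuclideanSpace ℝ (Fin n))) (hΩo : IsOpen Ω) (hΩb : Bornology.IsBounded Ω)
    (v : EuclideanSpace ℝ (Fin n) → ℝ) (K : NNReal) (hvLip : LipschitzWith K v)
    (hvnn : ∀ x, 0 ≤ v x) (hv0 : ∀ x, x ∉ Ω → v x = 0) :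
    ∫ x in Ω, ‖x‖ ^ a * v x ^ p * ⟪x, gradient v x⟫ =
      -((n + a) / (p + 1)) * ∫ x in Ω, ‖x‖ ^ a * v x ^ (p + 1) :=
  stmt_14_general n a p ha hp Ω hΩb v K hvLip hvnn hv0
end
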